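/- arXiv:2102.00384 — 8 statements merged into one kernel-verified Lean document; each statement's English description precedes it below -/
import Mathlib

section
/- For every order K ≥ 2 and every dimension d ≥ 1, there exists an order-K tensor Θ ∈ ℝ^{d×⋯×d} such that the CP rank of Θ is at least d, yet for every π ∈ ℝ there exists a tensor of CP rank at most 2 having the same sign pattern as Θ − π (i.e., srank(Θ − π) ≤ 2 for all π ∈ ℝ). -/
/-- The sign function: `sgn y = 1` if `y ≥ 0` and `-1` otherwise. -/
noncomputable def sgn (y : ℝ) : ℝ := if 0 ≤ y then 1 else -1

/-- An order-`|ι|` tensor `T` (with mode `k` of dimension `d k`) has CP rank at most `r`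
if it admits a CP decomposition with `r` rank-one terms. -/
def HasCPRankLE {ι : Type*} [Fintype ι] {d : ι → ℕ} (r : ℕ)
    (T : (∀ k, Fin (d k)) → ℝ) : Prop :=
  ∃ a : Fin r → (∀ k, Fin (d k) → ℝ), ∀ ω, T ω = ∑ s, ∏ k, a s k (ω k)

/-! The witness is `Θ ω = d - max_k ω k`. Its slice `Θ (i, j, …, j) = d - max i j` counts the
`t` with `i ≤ t` and `j ≤ t`, so it is `U * Uᵀ` for the upper unitriangular all-ones matrix `U`
and has determinant `1`; a CP decomposition with `r` terms factors the mode-`0` flattening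
through `ℝ^r`, whence `d ≤ r`. On the other hand `π ≤ Θ ω` iff `ω k ≤ d - π` for every `k`,
so `Θ - π` has the sign pattern of `2 ∏ k, 𝟙[ω k ≤ d - π] - 1`, a sum of two rank-one tensors. -/

open Finset

theorem sgn_eq_sgn_iff {x y : ℝ} : sgn x = sgn y ↔ (0 ≤ x ↔ 0 ≤ y) := by
  unfold sgn
  split_ifs <;> norm_num [*]

section CPRank

variable {ι : Type*} [Fintype ι] {d : ι → ℕ}

theorem HasCPRankLE.rank_flattening_le [DecidableEq ι] {r : ℕ} {T : (∀ k, Fin (d k)) → ℝ}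
    (hT : HasCPRankLE r T) (k₀ : ι) {n : Type*} [Fintype n] (ω : n → ∀ k, Fin (d k)) :
    (Matrix.of fun i j => T (Function.update (ω j) k₀ i)).rank ≤ r := by
  obtain ⟨a, ha⟩ := hT
  have hfactor : (Matrix.of fun i j => T (Function.update (ω j) k₀ i)) =
      Matrix.of (fun i s => a s k₀ i) *
        Matrix.of (fun s j => ∏ k ∈ univ.erase k₀, a s k (ω j k)) := by
    ext i j
    simp only [Matrix.of_apply, Matrix.mul_apply, ha, ← mul_prod_erase univ _ (mem_univ k₀),
      Function.update_self]
    refine sum_congr rfl fun s _ => congrArg _ (prod_congr rfl fun k hk => ?_)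
    rw [Function.update_of_ne (ne_of_mem_erase hk)]
  rw [hfactor]
  exact (Matrix.rank_mul_le_left _ _).trans (Matrix.rank_le_width _)

theorem exists_hasCPRankLE_two_nonneg_iff [Nonempty ι] (p : ∀ k, Fin (d k) → Prop) :
    ∃ Z : (∀ k, Fin (d k)) → ℝ, HasCPRankLE 2 Z ∧ ∀ ω, (0 ≤ Z ω ↔ ∀ k, p k (ω k)) := by
  classical
  obtain ⟨k₀⟩ := ‹Nonempty ι›
  refine ⟨fun ω => 2 * ∏ k, (if p k (ω k) then 1 else 0) - 1,
    ⟨![fun k _ => if k = k₀ then -1 else 1,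
      fun k i => (if k = k₀ then 2 else 1) * if p k i then 1 else 0], fun ω => ?_⟩,
    fun ω => ?_⟩
  · simp only [Fin.sum_univ_two, Matrix.cons_val_zero, Matrix.cons_val_one, prod_mul_distrib,
      prod_ite_eq', mem_univ, if_true]
    ring
  · simp only [Fintype.prod_boole]
    split_ifs <;> norm_num [*]

end CPRank

theorem Fin.sup_update_const_eq_max {K d : ℕ} {k₀ k₁ : Fin K} (h : k₁ ≠ k₀) (i j : Fin d) :
    (univ.sup fun k => (Function.update (fun _ => j) k₀ i k : ℕ)) = max (i : ℕ) j := by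
  have hne : (univ.erase k₀).Nonempty := ⟨k₁, mem_erase.2 ⟨h, mem_univ _⟩⟩
  rw [← insert_erase (mem_univ k₀), sup_insert, Function.update_self,
    sup_congr rfl fun k hk => by rw [Function.update_of_ne (ne_of_mem_erase hk)], sup_const hne]

theorem Matrix.det_natCast_sub_max (d : ℕ) :
    (Matrix.of fun i j : Fin d => (d : ℝ) - (max (i : ℕ) j : ℕ)).det = 1 := by
  set U : Matrix (Fin d) (Fin d) ℝ := Matrix.of fun i t => if i ≤ t then 1 else 0
  have hU : U.det = 1 := by
    rw [Matrix.det_of_isUpperTriangular]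
    · simp [U]
    · intro i t hti
      simpa [U] using hti
  have : (Matrix.of fun i j : Fin d => (d : ℝ) - (max (i : ℕ) j : ℕ)) = U * U.transpose := by
    ext i j
    simp only [U, Matrix.of_apply, Matrix.mul_apply, Matrix.transpose_apply, ite_zero_mul_ite_zero,
      mul_one, sum_boole]
    have hIci : ({x | i ≤ x ∧ j ≤ x} : Finset (Fin d)) = Ici (max i j) := by ext; simp
    rw [hIci, Fin.card_Ici, Fin.coe_max, Nat.cast_sub (max_le i.isLt.le j.isLt.le)]
  rw [this, Matrix.det_mul, Matrix.det_transpose, hU, one_mul]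

theorem stmt1_general (K d : ℕ) (hK : 2 ≤ K) :
    ∃ Θ : (Fin K → Fin d) → ℝ,
      (∀ r : ℕ, HasCPRankLE (d := fun _ : Fin K => d) r Θ → d ≤ r) ∧
      (∀ π : ℝ, ∃ Z : (Fin K → Fin d) → ℝ,
        HasCPRankLE (d := fun _ : Fin K => d) 2 Z ∧
        ∀ ω, sgn (Z ω) = sgn (Θ ω - π)) := by
  have : Nonempty (Fin K) := ⟨⟨0, by omega⟩⟩
  refine ⟨fun ω => d - (univ.sup fun k => (ω k : ℕ) : ℕ), fun r hr => ?_, fun π => ?_⟩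
  · have hk : (⟨1, hK⟩ : Fin K) ≠ ⟨0, by omega⟩ := by simp
    have h := hr.rank_flattening_le ⟨0, by omega⟩ (fun j _ => j)
    simp only [Fin.sup_update_const_eq_max hk] at h
    rwa [Matrix.rank_of_isUnit _ ((Matrix.isUnit_iff_isUnit_det _).2
      (by rw [Matrix.det_natCast_sub_max]; exact isUnit_one)), Fintype.card_fin] at h
  · obtain ⟨Z, hZ, hZ_nonneg⟩ :=
      exists_hasCPRankLE_two_nonneg_iff (d := fun _ : Fin K => d) fun _ i => (i : ℝ) ≤ d - π
    refine ⟨Z, hZ, fun ω => sgn_eq_sgn_iff.2 ?_⟩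
    rw [hZ_nonneg, sub_sub, sub_nonneg, ← le_sub_iff_add_le, ← sup'_eq_sup univ_nonempty,
      Nat.cast_finsetSup', sup'_le_iff]
    simp

/-- for every order `K ≥ 2` and dimension `d ≥ 1` there is an order-`K`
tensor `Θ ∈ ℝ^{d×⋯×d}` of CP rank at least `d` such that for every `π ∈ ℝ` some tensor
of CP rank at most `2` has the same sign pattern as `Θ - π`. -/
theorem stmt1 (K d : ℕ) (hK : 2 ≤ K) (hd : 1 ≤ d) :
    ∃ Θ : (Fin K → Fin d) → ℝ,
      (∀ r : ℕ, HasCPRankLE (d := fun _ : Fin K => d) r Θ → d ≤ r) ∧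
      (∀ π : ℝ, ∃ Z : (Fin K → Fin d) → ℝ,
        HasCPRankLE (d := fun _ : Fin K => d) 2 Z ∧
        ∀ ω, sgn (Z ω) = sgn (Θ ω - π)) :=
  stmt1_general K d hK
end

section
/- Fix π ∈ [−1,1]. Let Ω be a finite index set with probability weights {p_ω}, let Θ: Ω → [−1,1], and for each ω let μ_ω be a probability measure on [−1,1] with mean ∫ y dμ_ω(y) = Θ(ω). Define Risk(Z) = Σ_ω p_ω ∫ |y − π| · |sgn(Z(ω)) − sgn(y − π)| dμ_ω(y). Suppose there exists a tensor of CP rank at most r with the same sign pattern as Θ − π. Then for every Θ̄ with the same sign pattern as sgn(Θ − π): (i) Risk(Θ̄) ≤ Risk(Z) for every Z: Ω → ℝ, and (ii) the infimum of Risk(Z) over tensors Z of CP rank at most r equals Risk(Θ̄). -/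
/-!
Since `|t| * |sgn z - sgn t| = |t| - sgn z * t`, the summand of `Risk Z` at `ω` equals
`E|y - π| - sgn (Z ω) * (Θ ω - π)`, which is minimised when `sgn (Z ω) = sgn (Θ ω - π)`.
The risk depends on `Z` only through its sign pattern, so a CP-rank-`≤ r` tensor with the sign
pattern of `Θ - π` attains the global minimum, and the infimum over such tensors is a minimum.
-/

open MeasureTheory

/-- The weighted classification risk at level `π`:
`Risk(Z) = Σ_ω p_ω ∫ |y − π| · |sgn(Z(ω)) − sgn(y − π)| dμ_ω(y)`. -/
noncomputable def Risk {I : Type*} [Fintype I] (p : I → ℝ) (μ : I → Measure ℝ)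
    (π : ℝ) (Z : I → ℝ) : ℝ :=
  ∑ ω, p ω * ∫ y, |y - π| * |sgn (Z ω) - sgn (y - π)| ∂(μ ω)

lemma sgn_mul_self (t : ℝ) : sgn t * t = |t| := by
  unfold sgn
  split_ifs with h
  · rw [abs_of_nonneg h, one_mul]
  · rw [abs_of_neg (not_le.1 h), neg_one_mul]

lemma sgn_mul_le_abs (s t : ℝ) : sgn s * t ≤ |t| :=
  calc sgn s * t ≤ |sgn s| * |t| := abs_mul (sgn s) t ▸ le_abs_self _
    _ = |t| := by unfold sgn; split_ifs <;> norm_num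

lemma abs_mul_abs_sgn_sub_sgn (z t : ℝ) : |t| * |sgn z - sgn t| = |t| - sgn z * t := by
  unfold sgn
  rcases le_or_gt 0 t with ht | ht
  · rw [abs_of_nonneg ht, if_pos ht]
    split_ifs <;> norm_num; ring
  · rw [abs_of_neg ht, if_neg (not_le.2 ht)]
    split_ifs <;> norm_num; ring

lemma integrable_id_of_measure_compl_Icc_eq_zero {μ : Measure ℝ} [IsFiniteMeasure μ] {a : ℝ}
    (h : μ (Set.Icc (-a) a)ᶜ = 0) : Integrable (fun y : ℝ => y) μ := by
  refine Integrable.of_bound measurable_id.aestronglyMeasurable a ?_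
  filter_upwards [ae_iff.2 h] with y hy
  exact abs_le.2 hy

lemma integral_abs_mul_abs_sgn_sub_sgn (μ : Measure ℝ) [IsProbabilityMeasure μ]
    (hμ : Integrable (fun y : ℝ => y) μ) (π z : ℝ) :
    ∫ y, |y - π| * |sgn z - sgn (y - π)| ∂μ = ∫ y, |y - π| ∂μ - sgn z * (∫ y, y ∂μ - π) := by
  have hsub : Integrable (fun y : ℝ => y - π) μ := hμ.sub (integrable_const π)
  simp_rw [abs_mul_abs_sgn_sub_sgn]
  rw [integral_sub hsub.abs (hsub.const_mul _), integral_const_mul,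
    integral_sub hμ (integrable_const π), integral_const, probReal_univ, one_smul]

section Risk

variable {I : Type*} [Fintype I] (p : I → ℝ) (μ : I → Measure ℝ) (π : ℝ)

lemma Risk_congr_sgn {Z Z' : I → ℝ} (h : ∀ ω, sgn (Z ω) = sgn (Z' ω)) :
    Risk p μ π Z = Risk p μ π Z' := by
  simp only [Risk, h]

lemma Risk_le_Risk_of_sgn_eq [∀ ω, IsProbabilityMeasure (μ ω)] (hp : ∀ ω, 0 ≤ p ω)
    (hμ : ∀ ω, Integrable (fun y : ℝ => y) (μ ω)) {Θb : I → ℝ}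
    (hΘb : ∀ ω, sgn (Θb ω) = sgn (∫ y, y ∂(μ ω) - π)) (Z : I → ℝ) :
    Risk p μ π Θb ≤ Risk p μ π Z := by
  unfold Risk
  refine Finset.sum_le_sum fun ω _ => mul_le_mul_of_nonneg_left ?_ (hp ω)
  simp only [integral_abs_mul_abs_sgn_sub_sgn (μ ω) (hμ ω), hΘb ω, sgn_mul_self]
  exact sub_le_sub_left (sgn_mul_le_abs _ _) _

end Risk

theorem stmt2_general {K : ℕ} {d : Fin K → ℕ} (π : ℝ)
    (p : (∀ k, Fin (d k)) → ℝ) (hp0 : ∀ ω, 0 ≤ p ω)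
    (Θ : (∀ k, Fin (d k)) → ℝ)
    (μ : (∀ k, Fin (d k)) → Measure ℝ)
    (hμ : ∀ ω, IsProbabilityMeasure (μ ω))
    (hsupp : ∀ ω, μ ω (Set.Icc (-1 : ℝ) 1)ᶜ = 0)
    (hmean : ∀ ω, (∫ y, y ∂(μ ω)) = Θ ω)
    (r : ℕ)
    (hsr : ∃ Z : (∀ k, Fin (d k)) → ℝ,
      HasCPRankLE r Z ∧ ∀ ω, sgn (Z ω) = sgn (Θ ω - π))
    (Θb : (∀ k, Fin (d k)) → ℝ) (hΘb : ∀ ω, sgn (Θb ω) = sgn (Θ ω - π)) :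
    (∀ Z : (∀ k, Fin (d k)) → ℝ, Risk p μ π Θb ≤ Risk p μ π Z) ∧
    IsGLB {x : ℝ | ∃ Z : (∀ k, Fin (d k)) → ℝ,
      HasCPRankLE r Z ∧ x = Risk p μ π Z} (Risk p μ π Θb) := by
  have hmin : ∀ Z, Risk p μ π Θb ≤ Risk p μ π Z :=
    Risk_le_Risk_of_sgn_eq p μ π hp0
      (fun ω => integrable_id_of_measure_compl_Icc_eq_zero (hsupp ω))
      (fun ω => by rw [hmean, hΘb])
  obtain ⟨Z₀, hZ₀r, hZ₀s⟩ := hsr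
  refine ⟨hmin, IsLeast.isGLB ⟨⟨Z₀, hZ₀r, ?_⟩, ?_⟩⟩
  · exact Risk_congr_sgn p μ π fun ω => by rw [hΘb, hZ₀s]
  · rintro x ⟨Z, -, rfl⟩
    exact hmin Z

/-- Proposition: global optimum of weighted risk: if some tensor of CP rank
at most `r` has the same sign pattern as `Θ - π`, then any `Θ̄` sign-equivalent to
`sgn(Θ - π)` minimizes the risk over all tensors, and the infimum of the risk over
CP-rank-`≤ r` tensors equals `Risk(Θ̄)`. -/
theorem stmt2 {K : ℕ} {d : Fin K → ℕ} (π : ℝ) (hπ : π ∈ Set.Icc (-1 : ℝ) 1)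
    (p : (∀ k, Fin (d k)) → ℝ) (hp0 : ∀ ω, 0 ≤ p ω) (hp1 : ∑ ω, p ω = 1)
    (Θ : (∀ k, Fin (d k)) → ℝ) (hΘ : ∀ ω, Θ ω ∈ Set.Icc (-1 : ℝ) 1)
    (μ : (∀ k, Fin (d k)) → Measure ℝ)
    (hμ : ∀ ω, IsProbabilityMeasure (μ ω))
    (hsupp : ∀ ω, μ ω (Set.Icc (-1 : ℝ) 1)ᶜ = 0)
    (hmean : ∀ ω, (∫ y, y ∂(μ ω)) = Θ ω)
    (r : ℕ)
    (hsr : ∃ Z : (∀ k, Fin (d k)) → ℝ,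
      HasCPRankLE r Z ∧ ∀ ω, sgn (Z ω) = sgn (Θ ω - π))
    (Θb : (∀ k, Fin (d k)) → ℝ) (hΘb : ∀ ω, sgn (Θb ω) = sgn (Θ ω - π)) :
    (∀ Z : (∀ k, Fin (d k)) → ℝ, Risk p μ π Θb ≤ Risk p μ π Z) ∧
    IsGLB {x : ℝ | ∃ Z : (∀ k, Fin (d k)) → ℝ,
      HasCPRankLE r Z ∧ x = Risk p μ π Z} (Risk p μ π Θb) :=
  stmt2_general π p hp0 Θ μ hμ hsupp hmean r hsr Θb hΘb
end

section
/- For every d ≥ 1, the d×d real matrix M with entries M(i,j) = log(1 + max(i,j)/d) for i,j ∈ {1,…,d} has rank d (i.e., M is invertible). -/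
/-!
A matrix of the form `M i j = f (max i j)` factors as `U D Uᵀ`, with `U` the upper unitriangular
all-ones matrix and `D` diagonal with entries `f k - f (k + 1)` (setting `f n = 0`), because
`f (max i j)` telescopes over `max i j ≤ k < n`. Hence `det M = ∏ (f k - f (k + 1))`. For
`f k = log (1 + (k + 1) / d)` these factors are nonzero: `log` is strictly increasing, and the last
one is `log 2`.
-/

open Finset Matrix

section MaxMatrix

variable {R : Type*} [CommRing R] {n : ℕ}

variable (R n) in
def upperOnes : Matrix (Fin n) (Fin n) R := of fun i k => if i ≤ k then 1 else 0

theorem det_upperOnes : (upperOnes R n).det = 1 := by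
  have : (upperOnes R n).BlockTriangular id := fun a b hab => if_neg (not_le_of_gt hab)
  rw [det_of_isUpperTriangular this]
  simp [upperOnes]

theorem of_max_eq_upperOnes_mul_diagonal_mul_transpose (f : ℕ → R) (hf : f n = 0) :
    of (fun i j : Fin n => f (max i.val j.val)) =
      upperOnes R n * diagonal (fun k : Fin n => f k - f (k + 1)) * (upperOnes R n)ᵀ := by
  ext i j
  set m := max i.val j.val
  have hm : m < n := max_lt i.isLt j.isLt
  calc f m
      = ∑ k ∈ Ico m n, (f k - f (k + 1)) := by
        rw [← neg_inj, ← sum_neg_distrib]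
        simp only [neg_sub]
        rw [sum_Ico_sub f hm.le, hf, zero_sub]
    _ = ∑ k : Fin n, if m ≤ k then f k - f (k + 1) else 0 := by
        rw [Fin.sum_univ_eq_sum_range (fun k => if m ≤ k then f k - f (k + 1) else 0), ← sum_filter]
        congr 1
        ext k
        simp only [mem_Ico, mem_filter, mem_range]
        omega
    _ = _ := by
        rw [mul_apply]
        refine sum_congr rfl fun k _ => ?_
        simp only [mul_diagonal, upperOnes, transpose_apply, of_apply]
        by_cases hi : i ≤ k <;> by_cases hj : j ≤ k <;> simp [hi, hj] <;> omega

theorem det_of_max (f : ℕ → R) (hf : f n = 0) :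
    (of fun i j : Fin n => f (max i.val j.val)).det = ∏ k : Fin n, (f k - f (k + 1)) := by
  rw [of_max_eq_upperOnes_mul_diagonal_mul_transpose f hf, det_mul, det_mul, det_transpose,
    det_upperOnes, det_diagonal, one_mul, mul_one]

end MaxMatrix

/-- `M i j = logEntry d (max i j)`; the value `0` at `k = d` plays the role of `f n = 0` above. -/
noncomputable def logEntry (d k : ℕ) : ℝ := if k < d then Real.log (1 + (k + 1) / d) else 0

theorem logEntry_sub_succ_ne_zero {d k : ℕ} (hk : k < d) :
    logEntry d k - logEntry d (k + 1) ≠ 0 := by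
  have hd : (0 : ℝ) < d := by exact_mod_cast (k.zero_le.trans_lt hk)
  rcases (show k + 1 ≤ d from hk).lt_or_eq with hk1 | hk1
  · refine (sub_neg.2 ?_).ne
    simp only [logEntry, if_pos hk, if_pos hk1]
    apply Real.log_lt_log (by positivity)
    gcongr
    linarith
  · have hlast : ((k : ℝ) + 1) / d = 1 := by
      rw [div_eq_one_iff_eq hd.ne']; exact_mod_cast hk1
    simp only [logEntry, if_pos hk, hk1, lt_irrefl, if_false, hlast]
    norm_num

theorem stmt8_general (d : ℕ) (M : Matrix (Fin d) (Fin d) ℝ)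
    (hM : ∀ i j : Fin d,
      M i j = Real.log (1 + ((max (i.val + 1) (j.val + 1) : ℕ) : ℝ) / (d : ℝ))) :
    M.rank = d ∧ IsUnit M := by
  have hM' : M = of fun i j : Fin d => logEntry d (max i.val j.val) := by
    ext i j
    rw [hM, of_apply, logEntry, if_pos (max_lt i.isLt j.isLt), Nat.add_max_add_right]
    push_cast
    rfl
  have hdet : M.det ≠ 0 := by
    rw [hM', det_of_max _ (by simp [logEntry])]
    exact prod_ne_zero_iff.2 fun k _ => logEntry_sub_succ_ne_zero k.isLt
  have hunit : IsUnit M := (isUnit_iff_isUnit_det M).2 hdet.isUnit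
  exact ⟨by simp [rank_of_isUnit M hunit], hunit⟩

/-- the `d×d` matrix with entries `M(i,j) = log(1 + max(i,j)/d)`
(for `i, j ∈ {1,…,d}`) has full rank `d`, i.e. it is invertible. -/
theorem stmt8 (d : ℕ) (hd : 1 ≤ d) (M : Matrix (Fin d) (Fin d) ℝ)
    (hM : ∀ i j : Fin d,
      M i j = Real.log (1 + ((max (i.val + 1) (j.val + 1) : ℕ) : ℝ) / (d : ℝ))) :
    M.rank = d ∧ IsUnit M :=
  stmt8_general d M hM
end

section
/- Let K ≥ 2 and d ≥ 1, and let Θ be the order-K tensor with entries Θ(i₁,…,i_K) = log(1 + max(i₁,…,i_K)/d) for (i₁,…,i_K) ∈ {1,…,d}^K. Then for every π ∈ ℝ there exists a tensor of CP rank at most 2 having the same sign pattern as Θ − π; that is, srank(Θ − π) ≤ 2 for all π ∈ ℝ. -/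
/-!
The function `n ↦ log (1 + n / d)` is monotone, so `Θ(ω) < π` exactly when every coordinate
satisfies `log (1 + (ω k + 1) / d) < π`. Hence the sign pattern of `Θ − π` is that of
`1 − 2 ∏ₖ g(ω k)`, where `g` is the indicator of the sublevel set of the coordinate profile;
this is a constant plus a rank-one tensor.
-/

open Finset

theorem hasCPRankLE_two_const_sub_mul_prod {ι : Type*} [Fintype ι] [Nonempty ι]
    {d : ι → ℕ} (c a : ℝ) (g : ∀ k, Fin (d k) → ℝ) :
    HasCPRankLE 2 (fun ω => c - a * ∏ k, g k (ω k)) := by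
  classical
  obtain ⟨k₀⟩ := ‹Nonempty ι›
  refine ⟨![fun k _ => if k = k₀ then c else 1,
    fun k i => (if k = k₀ then -a else 1) * g k i], fun ω => ?_⟩
  simp only [Fin.sum_univ_two, Matrix.cons_val_zero, Matrix.cons_val_one, prod_mul_distrib,
    prod_ite_eq', mem_univ, if_true]
  ring

theorem Monotone.apply_sup_lt_iff {ι α β : Type*} [Fintype ι] [Nonempty ι] [LinearOrder α]
    [OrderBot α] [Preorder β] {f : α → β} (hf : Monotone f) (x : ι → α) (b : β) :
    f (univ.sup x) < b ↔ ∀ k, f (x k) < b := by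
  obtain ⟨k, -, hk⟩ := exists_mem_eq_sup univ univ_nonempty x
  refine ⟨fun h j => (hf (le_sup (mem_univ j))).trans_lt h, fun h => ?_⟩
  rw [hk]
  exact h k

theorem sgn_sub_eq_sgn_one_sub_two_mul_ite (y b : ℝ) :
    sgn (y - b) = sgn (1 - 2 * if y < b then 1 else 0) := by
  unfold sgn
  split_ifs <;> linarith

theorem monotone_log_one_add_div_natCast (d : ℕ) :
    Monotone fun n : ℕ => Real.log (1 + (n : ℝ) / d) := fun m n hmn => by
  have hpos : 0 < 1 + (m : ℝ) / d := by positivity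
  exact Real.log_le_log hpos (by gcongr)

theorem stmt9_general (K d : ℕ) (hK : 2 ≤ K)
    (Θ : (Fin K → Fin d) → ℝ)
    (hΘ : ∀ ω, Θ ω =
      Real.log (1 + ((Finset.univ.sup (fun k : Fin K => (ω k).val + 1) : ℕ) : ℝ) / (d : ℝ)))
    (π : ℝ) :
    ∃ Z : (Fin K → Fin d) → ℝ,
      HasCPRankLE (d := fun _ : Fin K => d) 2 Z ∧
      ∀ ω, sgn (Z ω) = sgn (Θ ω - π) := by
  have : Nonempty (Fin K) := ⟨⟨0, by omega⟩⟩
  have hf := monotone_log_one_add_div_natCast d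
  refine ⟨_, hasCPRankLE_two_const_sub_mul_prod 1 2
    fun _ (i : Fin d) => if Real.log (1 + ((i.val + 1 : ℕ) : ℝ) / d) < π then 1 else 0,
    fun ω => ?_⟩
  rw [hΘ, sgn_sub_eq_sgn_one_sub_two_mul_ite _ π]
  simp only [hf.apply_sup_lt_iff, Fintype.prod_boole]
  congr

/-- max hypergraphon: for the order-`K` tensor with entries
`Θ(i₁,…,i_K) = log(1 + max(i₁,…,i_K)/d)` on `{1,…,d}^K`, every level shift `Θ − π` has
the same sign pattern as some tensor of CP rank at most `2`, i.e. `srank(Θ − π) ≤ 2`. -/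
theorem stmt9 (K d : ℕ) (hK : 2 ≤ K) (hd : 1 ≤ d)
    (Θ : (Fin K → Fin d) → ℝ)
    (hΘ : ∀ ω, Θ ω =
      Real.log (1 + ((Finset.univ.sup (fun k : Fin K => (ω k).val + 1) : ℕ) : ℝ) / (d : ℝ)))
    (π : ℝ) :
    ∃ Z : (Fin K → Fin d) → ℝ,
      HasCPRankLE (d := fun _ : Fin K => d) 2 Z ∧
      ∀ ω, sgn (Z ω) = sgn (Θ ω - π) :=
  stmt9_general K d hK Θ hΘ π
end

section
/- Let x^{(k)}_{i_k} ∈ [0,1] be given numbers for i_k ∈ {1,…,d_k}, k ∈ {1,…,K}, and let Z_max be the order-K tensor with entries Z_max(i₁,…,i_K) = max(x^{(1)}_{i₁},…,x^{(K)}_{i_K}). Let g: ℝ → ℝ be continuous, fix π ∈ ℝ, and suppose the set {z ∈ ℝ : g(z) = π} has at most r elements for some r ≥ 1. Let Θ = g(Z_max) entrywise. Then there exists a tensor of CP rank at most 2r having the same sign pattern as Θ − π; that is, srank(Θ − π) ≤ 2r. -/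
open Finset

theorem sgn_of_nonneg {y : ℝ} (h : 0 ≤ y) : sgn y = 1 := if_pos h

theorem sgn_of_neg {y : ℝ} (h : y < 0) : sgn y = -1 := if_neg h.not_ge

theorem sgn_eq_one_or_eq_neg_one (y : ℝ) : sgn y = 1 ∨ sgn y = -1 := by
  unfold sgn; split_ifs <;> simp

theorem sgn_of_eq_one_or_eq_neg_one {σ : ℝ} (hσ : σ = 1 ∨ σ = -1) : sgn σ = σ := by
  rcases hσ with rfl | rfl <;> norm_num [sgn]

theorem sgn_eq_of_continuousOn_of_ne_zero {h : ℝ → ℝ} {S : Set ℝ} (hS : S.OrdConnected)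
    (hh : ContinuousOn h S) (h0 : ∀ t ∈ S, h t ≠ 0) {u v : ℝ} (hu : u ∈ S) (hv : v ∈ S) :
    sgn (h u) = sgn (h v) := by
  by_contra hne
  have hsub := hS.uIcc_subset hu hv
  have hzero : (0 : ℝ) ∈ Set.uIcc (h u) (h v) := by
    unfold sgn at hne
    rw [Set.mem_uIcc]
    split_ifs at hne with hu' hv' hv'
    · exact absurd rfl hne
    · exact Or.inr ⟨by linarith, hu'⟩
    · exact Or.inl ⟨by linarith, hv'⟩
    · exact absurd rfl hne
  obtain ⟨t, ht, ht0⟩ := intermediate_value_uIcc (hh.mono hsub) hzero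
  exact h0 t (hsub ht) ht0

section Tensor

variable {ι : Type*} [Fintype ι] {d : ι → ℕ}

namespace HasCPRankLE

theorem add {p q : ℕ} {F G : (∀ k, Fin (d k)) → ℝ} (hF : HasCPRankLE p F)
    (hG : HasCPRankLE q G) : HasCPRankLE (p + q) (F + G) := by
  obtain ⟨a, ha⟩ := hF
  obtain ⟨b, hb⟩ := hG
  exact ⟨Fin.append a b, fun ω => by simp [Fin.sum_univ_add, ha, hb]⟩

theorem mul {p q : ℕ} {F G : (∀ k, Fin (d k)) → ℝ} (hF : HasCPRankLE p F)
    (hG : HasCPRankLE q G) : HasCPRankLE (p * q) (F * G) := by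
  obtain ⟨a, ha⟩ := hF
  obtain ⟨b, hb⟩ := hG
  refine ⟨fun s k i => a (finProdFinEquiv.symm s).1 k i * b (finProdFinEquiv.symm s).2 k i,
    fun ω => ?_⟩
  simp only [Pi.mul_apply, ha, hb, prod_mul_distrib, sum_mul_sum, ← Fintype.sum_prod_type']
  exact (finProdFinEquiv.symm.sum_comp fun st => (∏ k, a st.1 k (ω k)) * ∏ k, b st.2 k (ω k)).symm

end HasCPRankLE

theorem hasCPRankLE_one_prod (v : ∀ k, Fin (d k) → ℝ) :
    HasCPRankLE 1 fun ω : (∀ k, Fin (d k)) => ∏ k, v k (ω k) :=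
  ⟨fun _ => v, fun ω => by simp⟩

section Halving

variable (x : ∀ k, Fin (d k) → ℝ)

noncomputable def halvingTensor (a : ℝ) (ω : ∀ k, Fin (d k)) : ℝ :=
  ∏ k, if x k (ω k) = a then (1 / 2 : ℝ) else 1

theorem hasCPRankLE_halvingTensor (a : ℝ) : HasCPRankLE 1 (halvingTensor x a) :=
  hasCPRankLE_one_prod fun k i => if x k i = a then 1 / 2 else 1

theorem halvingTensor_pos (a : ℝ) (ω : ∀ k, Fin (d k)) : 0 < halvingTensor x a ω :=
  prod_pos fun k _ => by split_ifs <;> norm_num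

end Halving

variable [Nonempty ι]

theorem hasCPRankLE_zero (n : ℕ) : HasCPRankLE n (0 : (∀ k, Fin (d k)) → ℝ) :=
  ⟨0, fun ω => by simp⟩

theorem hasCPRankLE_const (c : ℝ) : HasCPRankLE 1 fun _ : (∀ k, Fin (d k)) => c := by
  classical
  let k₀ := Classical.arbitrary ι
  convert hasCPRankLE_one_prod fun k (_ : Fin (d k)) => if k = k₀ then c else 1
  simp

theorem HasCPRankLE.mono {p q : ℕ} {F : (∀ k, Fin (d k)) → ℝ} (hpq : p ≤ q)
    (hF : HasCPRankLE p F) : HasCPRankLE q F := by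
  simpa [Nat.add_sub_cancel' hpq] using hF.add (hasCPRankLE_zero (q - p))

def maxTensor (x : ∀ k, Fin (d k) → ℝ) (ω : ∀ k, Fin (d k)) : ℝ :=
  univ.sup' univ_nonempty fun k => x k (ω k)

section MaxTensor

variable (x : ∀ k, Fin (d k) → ℝ)

theorem hasCPRankLE_maxTensor_lt (a : ℝ) :
    HasCPRankLE 1 fun ω => if maxTensor x ω < a then (1 : ℝ) else 0 := by
  convert hasCPRankLE_one_prod fun k i => if x k i < a then (1 : ℝ) else 0 using 2
  simp [prod_boole, maxTensor, sup'_lt_iff]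

theorem hasCPRankLE_maxTensor_le (a : ℝ) :
    HasCPRankLE 1 fun ω => if maxTensor x ω ≤ a then (1 : ℝ) else 0 := by
  convert hasCPRankLE_one_prod fun k i => if x k i ≤ a then (1 : ℝ) else 0 using 2
  simp [prod_boole, maxTensor, sup'_le_iff]

theorem halvingTensor_of_lt {a : ℝ} {ω : ∀ k, Fin (d k)} (h : maxTensor x ω < a) :
    halvingTensor x a ω = 1 := by
  rw [maxTensor, sup'_lt_iff] at h
  exact prod_eq_one fun k _ => if_neg (h k (mem_univ k)).ne

theorem halvingTensor_maxTensor_le_half (ω : ∀ k, Fin (d k)) :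
    halvingTensor x (maxTensor x ω) ω ≤ 1 / 2 := by
  classical
  obtain ⟨k₀, -, hk₀⟩ := exists_mem_eq_sup' univ_nonempty fun k => x k (ω k)
  have hk : x k₀ (ω k₀) = maxTensor x ω := hk₀.symm
  rw [halvingTensor, ← mul_prod_erase univ _ (mem_univ k₀), if_pos hk]
  exact mul_le_of_le_one_right (by norm_num)
    (prod_le_one (fun k _ => by split_ifs <;> norm_num) fun k _ => by split_ifs <;> norm_num)

end MaxTensor

/-- Only entries with `maxTensor x ω < b` are constrained, so that the induction over the zeros of
`g - π` can work below the current zero. -/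
def HasSignPatternBelow (x : ∀ k, Fin (d k) → ℝ) (τ : ℝ → ℝ) (b : ℝ)
    (F : (∀ k, Fin (d k)) → ℝ) : Prop :=
  ∀ ω, maxTensor x ω < b → sgn (F ω) = τ (maxTensor x ω)

section SignPattern

variable {x : ∀ k, Fin (d k) → ℝ} {τ : ℝ → ℝ} {a b σ : ℝ}

theorem HasSignPatternBelow.extend {p : ℕ} {F : (∀ k, Fin (d k)) → ℝ}
    (hF : HasSignPatternBelow x τ a F) (hFr : HasCPRankLE p F) (ha : τ a = 1)
    (hσ : σ = 1 ∨ σ = -1) (habove : ∀ t ∈ Set.Ioo a b, τ t = σ) :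
    ∃ F', HasCPRankLE (p + 2) F' ∧ HasSignPatternBelow x τ b F' := by
  refine ⟨fun ω => (if maxTensor x ω < a then 1 else 0) * F ω +
      (σ + -σ * if maxTensor x ω ≤ a then 1 else 0), ?_, fun ω hb => ?_⟩
  · exact (((hasCPRankLE_maxTensor_lt x a).mul hFr).add ((hasCPRankLE_const σ).add
      ((hasCPRankLE_const (-σ)).mul (hasCPRankLE_maxTensor_le x a)))).mono (by omega)
  · rcases lt_trichotomy (maxTensor x ω) a with h | h | h
    · simp [h, h.le, hF ω h]
    · simp [h, ha, sgn]
    · simp [not_lt.2 h.le, not_le.2 h, habove _ ⟨h, hb⟩, sgn_of_eq_one_or_eq_neg_one hσ]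

theorem exists_hasSignPatternBelow_of_single {c : ℝ} (hbelow : ∀ t < a, τ t = c)
    (hc : c = 1 ∨ c = -1) (ha : τ a = 1) (hσ : σ = 1 ∨ σ = -1)
    (habove : ∀ t ∈ Set.Ioo a b, τ t = σ) :
    ∃ F, HasCPRankLE 2 F ∧ HasSignPatternBelow x τ b F := by
  rcases hc with rfl | rfl
  · exact HasSignPatternBelow.extend (fun ω h => by simp [sgn, hbelow _ h])
      (hasCPRankLE_zero 0) ha hσ habove
  rcases hσ with rfl | rfl
  · refine ⟨fun ω => 1 + -2 * if maxTensor x ω < a then 1 else 0,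
      (hasCPRankLE_const 1).add ((hasCPRankLE_const (-2)).mul (hasCPRankLE_maxTensor_lt x a)),
      fun ω hb => ?_⟩
    rcases lt_or_ge (maxTensor x ω) a with h | h
    · norm_num [h, hbelow _ h, sgn]
    · rcases h.eq_or_lt with h | h
      · norm_num [← h, ha, sgn]
      · norm_num [not_lt.2 h.le, habove _ ⟨h, hb⟩, sgn]
  · refine ⟨fun ω => (if maxTensor x ω ≤ a then 1 else 0) + -2 * halvingTensor x a ω,
      (hasCPRankLE_maxTensor_le x a).add
        ((hasCPRankLE_const (-2)).mul (hasCPRankLE_halvingTensor x a)),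
      fun ω hb => ?_⟩
    rcases lt_trichotomy (maxTensor x ω) a with h | h | h
    · norm_num [h.le, halvingTensor_of_lt x h, hbelow _ h, sgn]
    · have hQ := halvingTensor_maxTensor_le_half x ω
      rw [h] at hQ
      simp only [h, le_refl, if_true]
      rw [ha]
      exact sgn_of_nonneg (by linarith)
    · simp only [not_le.2 h, if_false]
      rw [habove _ ⟨h, hb⟩]
      exact sgn_of_neg (by linarith [halvingTensor_pos x a ω])

theorem exists_hasSignPatternBelow {h : ℝ → ℝ} (hh : Continuous h) (s : Finset ℝ) :
    ∀ b, (∀ t, t ∈ s ↔ t < b ∧ h t = 0) →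
      ∃ F, HasCPRankLE (max 1 (2 * #s)) F ∧ HasSignPatternBelow x (fun t => sgn (h t)) b F := by
  induction s using Finset.induction_on_max with
  | empty =>
    intro b hs
    refine ⟨fun _ => sgn (h (b - 1)), hasCPRankLE_const _, fun ω hω => ?_⟩
    rw [sgn_of_eq_one_or_eq_neg_one (sgn_eq_one_or_eq_neg_one _)]
    exact sgn_eq_of_continuousOn_of_ne_zero Set.ordConnected_Iio hh.continuousOn
      (fun t ht h0 => by simpa using (hs t).2 ⟨ht, h0⟩) (by linarith : b - 1 < b) hω
  | insert a s hlt ih =>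
    intro b hs
    obtain ⟨hab, ha⟩ := (hs a).1 (mem_insert_self a s)
    have hs' : ∀ t, t ∈ s ↔ t < a ∧ h t = 0 := fun t =>
      ⟨fun ht => ⟨hlt t ht, ((hs t).1 (mem_insert_of_mem ht)).2⟩, fun ⟨hta, ht0⟩ =>
        ((mem_insert.1 ((hs t).2 ⟨hta.trans hab, ht0⟩)).resolve_left hta.ne)⟩
    have hτa : sgn (h a) = 1 := by rw [ha]; exact sgn_of_nonneg le_rfl
    have habove : ∀ t ∈ Set.Ioo a b, sgn (h t) = sgn (h ((a + b) / 2)) := fun t ht =>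
      sgn_eq_of_continuousOn_of_ne_zero Set.ordConnected_Ioo hh.continuousOn
        (fun u hu h0 => (mem_insert.1 ((hs u).2 ⟨hu.2, h0⟩)).elim (fun hua => hu.1.ne' hua)
          fun hus => (hlt u hus).not_gt hu.1) ht ⟨by linarith, by linarith⟩
    rcases s.eq_empty_or_nonempty with rfl | hne
    · have hbelow : ∀ t < a, sgn (h t) = sgn (h (a - 1)) := fun t ht =>
        sgn_eq_of_continuousOn_of_ne_zero Set.ordConnected_Iio hh.continuousOn
          (fun u hu h0 => by simpa using (hs' u).2 ⟨hu, h0⟩) ht (by linarith : a - 1 < a)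
      simpa using exists_hasSignPatternBelow_of_single hbelow (sgn_eq_one_or_eq_neg_one _) hτa
        (sgn_eq_one_or_eq_neg_one _) habove
    · obtain ⟨F, hFr, hF⟩ := ih a hs'
      obtain ⟨F', hF'r, hF'⟩ := hF.extend hFr hτa (sgn_eq_one_or_eq_neg_one _) habove
      refine ⟨F', hF'r.mono ?_, hF'⟩
      rw [card_insert_of_notMem fun has => (hlt a has).false]
      have := hne.card_pos
      omega

end SignPattern

end Tensor

theorem stmt10_general {ι : Type*} [Fintype ι] [Nonempty ι] {d : ι → ℕ}
    (x : ∀ k, Fin (d k) → ℝ)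
    (g : ℝ → ℝ) (hg : Continuous g) (π : ℝ) (r : ℕ) (hr : 1 ≤ r)
    (hfin : {z : ℝ | g z = π}.Finite) (hcard : hfin.toFinset.card ≤ r)
    (Θ : (∀ k, Fin (d k)) → ℝ)
    (hΘ : ∀ ω, Θ ω = g (Finset.univ.sup' Finset.univ_nonempty (fun k => x k (ω k)))) :
    ∃ Z : (∀ k, Fin (d k)) → ℝ,
      HasCPRankLE (2 * r) Z ∧ ∀ ω, sgn (Z ω) = sgn (Θ ω - π) := by
  obtain ⟨b₀, hb₀⟩ := (hfin.union (Set.finite_range (maxTensor x))).bddAbove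
  have hzeros : ∀ t, t ∈ hfin.toFinset ↔ t < b₀ + 1 ∧ g t - π = 0 := fun t => by
    simp only [Set.Finite.mem_toFinset, Set.mem_ofPred_eq, sub_eq_zero, iff_and_self]
    exact fun ht => (hb₀ (Or.inl ht)).trans_lt (lt_add_one b₀)
  obtain ⟨F, hFr, hF⟩ := exists_hasSignPatternBelow (x := x) (hg.sub continuous_const) _ _ hzeros
  refine ⟨F, hFr.mono (by omega), fun ω => ?_⟩
  rw [hF ω ((hb₀ (Or.inr ⟨ω, rfl⟩)).trans_lt (lt_add_one b₀)), hΘ]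
  rfl

/-- general max hypergraphon: let
`Z_max(i₁,…,i_K) = max_k x^{(k)}_{i_k}` with `x^{(k)}_{i_k} ∈ [0,1]`, `g` continuous,
and suppose `{z : g(z) = π}` has at most `r ≥ 1` elements. Then `Θ = g(Z_max)` satisfies
`srank(Θ − π) ≤ 2r`: some tensor of CP rank at most `2r` has the sign pattern of `Θ − π`. -/
theorem stmt10 {ι : Type*} [Fintype ι] [Nonempty ι] {d : ι → ℕ}
    (x : ∀ k, Fin (d k) → ℝ) (hx : ∀ k i, x k i ∈ Set.Icc (0 : ℝ) 1)
    (g : ℝ → ℝ) (hg : Continuous g) (π : ℝ) (r : ℕ) (hr : 1 ≤ r)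
    (hfin : {z : ℝ | g z = π}.Finite) (hcard : hfin.toFinset.card ≤ r)
    (Θ : (∀ k, Fin (d k)) → ℝ)
    (hΘ : ∀ ω, Θ ω = g (Finset.univ.sup' Finset.univ_nonempty (fun k => x k (ω k)))) :
    ∃ Z : (∀ k, Fin (d k)) → ℝ,
      HasCPRankLE (2 * r) Z ∧ ∀ ω, sgn (Z ω) = sgn (Θ ω - π) :=
  stmt10_general x g hg π r hr hfin hcard Θ hΘ
end

section
/- For every d ≥ 2, the d×d real matrix M with entries M(i,j) = |i − j| for i,j ∈ {1,…,d} has rank d (i.e., M is invertible). -/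
/-!
Write `D` for the matrix and `f(x) = ∑ⱼ |x - j| vⱼ`, so that `D v` lists the values of `f` at the
vertices. The second difference of `t ↦ |t|` at integers is twice the indicator of `0`, hence
`f(i + 1) - 2 f(i) + f(i - 1) = 2 vᵢ` at every interior vertex. So `D v = 0` kills all interior
coordinates, after which `f(0) = (d - 1) v_{d-1}` and `f(d - 1) = (d - 1) v₀` kill the two endpoints.
-/

open Matrix

theorem abs_add_one_sub_two_mul_abs_add_abs_sub_one (n : ℤ) :
    |(n : ℝ) + 1| - 2 * |(n : ℝ)| + |(n : ℝ) - 1| = if n = 0 then 2 else 0 := by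
  rcases lt_trichotomy n 0 with hn | rfl | hn
  · have hn' : (n : ℝ) ≤ -1 := by exact_mod_cast Int.le_sub_one_of_lt hn
    rw [abs_of_nonpos (by linarith), abs_of_neg (by linarith), abs_of_neg (by linarith),
      if_neg hn.ne]
    ring
  · norm_num
  · have hn' : (1 : ℝ) ≤ n := by exact_mod_cast hn
    rw [abs_of_pos (by linarith), abs_of_pos (by linarith), abs_of_nonneg (by linarith),
      if_neg hn.ne']
    ring

noncomputable def pathDistMatrix (d : ℕ) : Matrix (Fin d) (Fin d) ℝ :=
  of fun i j => |((i : ℕ) : ℝ) - (j : ℕ)|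

variable {d : ℕ}

theorem pathDistMatrix_mulVec_apply (v : Fin d → ℝ) (i : Fin d) :
    (pathDistMatrix d *ᵥ v) i = ∑ j : Fin d, |((i : ℕ) : ℝ) - (j : ℕ)| * v j := rfl

theorem pathDistMatrix_mulVec_second_diff (v : Fin d → ℝ) {i₀ i i₁ : Fin d}
    (h₀ : (i₀ : ℕ) + 1 = i) (h₁ : (i : ℕ) + 1 = i₁) :
    (pathDistMatrix d *ᵥ v) i₁ - 2 * (pathDistMatrix d *ᵥ v) i + (pathDistMatrix d *ᵥ v) i₀
      = 2 * v i := by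
  have hcoeff (j : Fin d) : |((i₁ : ℕ) : ℝ) - (j : ℕ)| - 2 * |((i : ℕ) : ℝ) - (j : ℕ)|
      + |((i₀ : ℕ) : ℝ) - (j : ℕ)| = if i = j then 2 else 0 := by
    have h := abs_add_one_sub_two_mul_abs_add_abs_sub_one ((i : ℤ) - j)
    simp only [sub_eq_zero, Int.natCast_inj, Fin.val_inj] at h
    push_cast at h
    rw [← h, ← h₁, ← Nat.sub_eq_of_eq_add h₀.symm, Nat.cast_sub (by omega)]
    push_cast
    ring_nf
  simp only [pathDistMatrix_mulVec_apply, Finset.mul_sum, ← Finset.sum_sub_distrib,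
    ← Finset.sum_add_distrib]
  simp_rw [← mul_assoc, ← sub_mul, ← add_mul, hcoeff]
  simp

theorem eq_zero_of_pathDistMatrix_mulVec_eq_zero {n : ℕ} (hn : n ≠ 0) {v : Fin (n + 1) → ℝ}
    (hv : pathDistMatrix (n + 1) *ᵥ v = 0) : v = 0 := by
  have interior (i : Fin (n + 1)) (h0 : i ≠ 0) (hlast : i ≠ Fin.last n) : v i = 0 := by
    have hi0 : (i : ℕ) ≠ 0 := Fin.val_ne_zero_iff.mpr h0
    have hilast : (i : ℕ) ≠ n := fun h => hlast (Fin.ext h)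
    have := pathDistMatrix_mulVec_second_diff v (i₀ := ⟨i - 1, by omega⟩)
      (i₁ := ⟨i + 1, by omega⟩) (by simp; omega) rfl
    simpa [hv] using this
  have first : (pathDistMatrix (n + 1) *ᵥ v) 0 = n * v (Fin.last n) := by
    rw [pathDistMatrix_mulVec_apply, Finset.sum_eq_single (Fin.last n)]
    · simp
    · intro j _ hj
      by_cases hj0 : j = 0
      · simp [hj0]
      · simp [interior j hj0 hj]
    · simp
  have last : (pathDistMatrix (n + 1) *ᵥ v) (Fin.last n) = n * v 0 := by
    rw [pathDistMatrix_mulVec_apply, Finset.sum_eq_single 0]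
    · simp
    · intro j _ hj
      by_cases hjl : j = Fin.last n
      · simp [hjl]
      · simp [interior j hj hjl]
    · simp
  have hn' : (n : ℝ) ≠ 0 := by exact_mod_cast hn
  funext i
  by_cases h0 : i = 0
  · simpa [h0, hv, hn'] using last
  by_cases hlast : i = Fin.last n
  · simpa [hlast, hv, hn'] using first
  exact interior i h0 hlast

theorem isUnit_pathDistMatrix {n : ℕ} (hn : n ≠ 0) : IsUnit (pathDistMatrix (n + 1)) := by
  refine mulVec_injective_iff_isUnit.mp fun u w huw => ?_
  rw [← sub_eq_zero]
  exact eq_zero_of_pathDistMatrix_mulVec_eq_zero hn (by rw [mulVec_sub, huw, sub_self])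

/-- for `d ≥ 2`, the `d×d` matrix with entries `M(i,j) = |i − j|` has full
rank `d`, i.e. it is invertible. -/
theorem stmt12 (d : ℕ) (hd : 2 ≤ d) (M : Matrix (Fin d) (Fin d) ℝ)
    (hM : ∀ i j : Fin d, M i j = |(i.val : ℝ) - (j.val : ℝ)|) :
    M.rank = d ∧ IsUnit M := by
  obtain ⟨n, rfl⟩ : ∃ n, d = n + 1 := ⟨d - 1, by omega⟩
  have hMD : M = pathDistMatrix (n + 1) := Matrix.ext hM
  have hu : IsUnit M := hMD ▸ isUnit_pathDistMatrix (by omega)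
  exact ⟨by rw [rank_of_isUnit M hu, Fintype.card_fin], hu⟩
end

section
/- Let d ≥ 1 and let M be the d×d matrix with entries M(i,j) = |i − j|. Then for every π ∈ ℝ there exists a d×d real matrix B with matrix rank at most 3 such that sgn(B(i,j)) = sgn(M(i,j) − π) for all i,j ∈ {1,…,d}; that is, srank(M − π) ≤ 3 for all π ∈ ℝ. -/
open Matrix

theorem sgn_eq_sgn_of_nonneg_iff {x y : ℝ} (h : 0 ≤ x ↔ 0 ≤ y) : sgn x = sgn y := by
  simp only [sgn, h]

theorem Matrix.rank_of_sub_sq_sub_const_le_three {m n R : Type*} [Fintype m] [Fintype n]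
    [CommRing R] [StrongRankCondition R] (x : m → R) (y : n → R) (c : R) :
    (Matrix.of fun i j => (x i - y j) ^ 2 - c).rank ≤ 3 := by
  let P : Matrix m (Fin 3) R := Matrix.of fun i => ![x i ^ 2, x i, 1]
  let Q : Matrix (Fin 3) n R := Matrix.of ![1, fun j => -2 * y j, fun j => y j ^ 2 - c]
  have hPQ : Matrix.of (fun i j => (x i - y j) ^ 2 - c) = P * Q := by
    ext i j
    simp only [P, Q, of_apply, mul_apply, Fin.sum_univ_three, cons_val_zero, cons_val_one,
      cons_val', cons_val, cons_val_fin_one, Pi.one_apply, mul_one]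
    ring
  rw [hPQ]
  calc (P * Q).rank ≤ Q.rank := rank_mul_le_right P Q
    _ ≤ Fintype.card (Fin 3) := Q.rank_le_card_height
    _ = 3 := Fintype.card_fin 3

theorem sub_sq_max_nonneg_iff {a : ℝ} (ha : 0 ≤ a) (π : ℝ) :
    0 ≤ a ^ 2 - max π 0 ^ 2 ↔ 0 ≤ a - π := by
  rw [sub_nonneg, sub_nonneg, sq_le_sq₀ (le_max_right π 0) ha, max_le_iff]
  exact and_iff_left ha

theorem stmt13_general (d : ℕ) (M : Matrix (Fin d) (Fin d) ℝ)
    (hM : ∀ i j : Fin d, M i j = |(i.val : ℝ) - (j.val : ℝ)|) (π : ℝ) :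
    ∃ B : Matrix (Fin d) (Fin d) ℝ, B.rank ≤ 3 ∧
      ∀ i j, sgn (B i j) = sgn (M i j - π) := by
  refine ⟨Matrix.of fun i j => ((i.val : ℝ) - j.val) ^ 2 - max π 0 ^ 2,
    rank_of_sub_sq_sub_const_le_three _ _ _, fun i j => sgn_eq_sgn_of_nonneg_iff ?_⟩
  rw [hM, Matrix.of_apply, ← sq_abs]
  exact sub_sq_max_nonneg_iff (abs_nonneg _) π

/-- for the banded matrix `M(i,j) = |i − j|` and every `π ∈ ℝ`, there is a
matrix `B` of rank at most `3` with `sgn(B(i,j)) = sgn(M(i,j) − π)` for all `i, j`;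
that is, `srank(M − π) ≤ 3`. -/
theorem stmt13 (d : ℕ) (hd : 1 ≤ d) (M : Matrix (Fin d) (Fin d) ℝ)
    (hM : ∀ i j : Fin d, M i j = |(i.val : ℝ) - (j.val : ℝ)|) (π : ℝ) :
    ∃ B : Matrix (Fin d) (Fin d) ℝ, B.rank ≤ 3 ∧
      ∀ i j, sgn (B i j) = sgn (M i j - π) :=
  stmt13_general d M hM π
end

section
/- Let H ≥ 1 be an integer and θ ∈ [−1,1]. Then | (1/(2H+1)) · Σ_{h=−H}^{H} sgn(θ − h/H) − θ | ≤ 1/H, where the sum ranges over the grid π = h/H for integers h ∈ {−H,…,H}. -/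
lemma sgn_sub_div_eq_ite {c : ℝ} (hc : 0 < c) (θ : ℝ) (h : ℤ) :
    sgn (θ - h / c) = if h ≤ ⌊θ * c⌋ then 1 else -1 := by
  simp only [sgn, sub_nonneg, div_le_iff₀ hc, Int.le_floor]

lemma sum_Icc_ite_le (a b k : ℤ) (hak : a ≤ k + 1) (hkb : k ≤ b) :
    ∑ h ∈ Finset.Icc a b, (if h ≤ k then (1 : ℝ) else -1) = 2 * k + 1 - a - b := by
  have below : {h ∈ Finset.Icc a b | h ≤ k} = Finset.Icc a k := by
    ext h; simp only [Finset.mem_filter, Finset.mem_Icc]; omega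
  have above : {h ∈ Finset.Icc a b | ¬h ≤ k} = Finset.Ioc k b := by
    ext h; simp only [Finset.mem_filter, Finset.mem_Icc, Finset.mem_Ioc]; omega
  have card_below : ((Finset.Icc a k).card : ℝ) = k + 1 - a := by
    exact_mod_cast Int.card_Icc_of_le _ _ hak
  have card_above : ((Finset.Ioc k b).card : ℝ) = b - k := by
    exact_mod_cast Int.card_Ioc_of_le _ _ hkb
  rw [Finset.sum_ite, below, above, Finset.sum_const, Finset.sum_const, nsmul_eq_mul,
    nsmul_eq_mul, card_below, card_above]
  ring

lemma abs_two_mul_add_one_div_sub_le {H θ : ℝ} (hH : 0 < H) (hθ : |θ| ≤ 1) {k : ℤ}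
    (hk : k ≤ θ * H) (hk' : θ * H < k + 1) :
    |(2 * k + 1) / (2 * H + 1) - θ| ≤ 1 / H := by
  have h2H : 0 < 2 * H + 1 := by linarith
  have numerator_le_two : |2 * k + 1 - (2 * H + 1) * θ| ≤ 2 := by
    rw [abs_le] at hθ ⊢
    constructor <;> linarith
  rw [div_sub' h2H.ne', abs_div, abs_of_pos h2H, div_le_div_iff₀ h2H hH]
  nlinarith

/-- for an integer `H ≥ 1` and `θ ∈ [−1,1]`, the average of the sign series
over the grid `{h/H : −H ≤ h ≤ H}` approximates `θ` within `1/H`: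
`|(1/(2H+1))·Σ_{h=−H}^{H} sgn(θ − h/H) − θ| ≤ 1/H`. -/
theorem stmt17 (H : ℕ) (hH : 1 ≤ H) (θ : ℝ) (hθ : θ ∈ Set.Icc (-1 : ℝ) 1) :
    |(1 / (2 * (H : ℝ) + 1)) *
        (∑ h ∈ Finset.Icc (-(H : ℤ)) (H : ℤ), sgn (θ - (h : ℝ) / (H : ℝ))) - θ|
      ≤ 1 / (H : ℝ) := by
  have hHpos : (0 : ℝ) < H := by exact_mod_cast hH
  obtain ⟨hθ₁, hθ₂⟩ := hθ
  have hk_lower : -(H : ℤ) ≤ ⌊θ * H⌋ + 1 := by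
    have : -(H : ℤ) ≤ ⌊θ * H⌋ := Int.le_floor.mpr (by push_cast; nlinarith)
    omega
  have hk_upper : ⌊θ * H⌋ ≤ H := Int.floor_le_iff.mpr (by push_cast; nlinarith)
  rw [Finset.sum_congr rfl fun h _ ↦ sgn_sub_div_eq_ite hHpos θ h,
    sum_Icc_ite_le _ _ _ hk_lower hk_upper]
  convert abs_two_mul_add_one_div_sub_le hHpos (abs_le.mpr ⟨hθ₁, hθ₂⟩) (Int.floor_le _)
    (Int.lt_floor_add_one _) using 3
  push_cast
  ring
end
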